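/- For every fixed γ ∈ [0,1], the function p ↦ E_0(p,γ) is differentiable at p = 0 with derivative ∂E_0(p,γ)/∂p |_{p=0} = (γ/ln 2)·(1 − Σ_{y∈𝒴} P(y|0)^{γ/(1+γ)}·P(y|1)^{1/(1+γ)}), and this derivative is nonnegative. -/

import Mathlib

open Finset

/-- Gallager-type function
`E_0(p,γ) = −log₂ Σ_y P(y|0)^{1/(1+γ)}·[(1−p)·P(y|0)^{1/(1+γ)} + p·P(y|1)^{1/(1+γ)}]^γ`. -/
noncomputable def gallagerE0 {𝒴 : Type} [Fintype 𝒴] (P : ZMod 2 → 𝒴 → ℝ)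
    (p γ : ℝ) : ℝ :=
  -Real.logb 2 (∑ y : 𝒴, P 0 y ^ ((1 : ℝ) / (1 + γ)) *
    ((1 - p) * P 0 y ^ ((1 : ℝ) / (1 + γ)) + p * P 1 y ^ ((1 : ℝ) / (1 + γ))) ^ γ)

/-! Put `u y = P(y|0)^{1/(1+γ)}` and `v y = P(y|1)^{1/(1+γ)}`. The argument of the
logarithm is `Σ u ((1-p) u + p v)^γ`, which equals `Σ u^{1+γ} = 1` at `p = 0` and has derivative
`γ Σ u^γ (v - u) = γ (Σ P(y|0)^{γ/(1+γ)} P(y|1)^{1/(1+γ)} - 1)` there. The sum is at most `1` by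
the weighted AM-GM inequality applied termwise, so the derivative is nonnegative. -/

namespace Real

theorem hasDerivAt_mul_lineMap_rpow_zero {u : ℝ} (hu : 0 < u) (v γ : ℝ) :
    HasDerivAt (fun p => u * ((1 - p) * u + p * v) ^ γ) (γ * (u ^ γ * v - u ^ γ * u)) 0 := by
  have hline : HasDerivAt (fun p : ℝ => (1 - p) * u + p * v) (v - u) 0 :=
    ((((hasDerivAt_id' (0 : ℝ)).const_sub 1).mul_const u).fun_add
      ((hasDerivAt_id' (0 : ℝ)).mul_const v)).congr_deriv (by ring)
  refine ((hline.rpow_const (Or.inl (by simpa using hu.ne'))).const_mul u).congr_deriv ?_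
  simp only [sub_zero, one_mul, zero_mul, add_zero, rpow_sub_one hu.ne']
  field_simp

theorem rpow_one_div_one_add_rpow {a : ℝ} (ha : 0 ≤ a) (γ : ℝ) :
    (a ^ (1 / (1 + γ))) ^ γ = a ^ (γ / (1 + γ)) := by
  rw [← rpow_mul ha, one_div_mul_eq_div]

theorem rpow_div_one_add_mul_rpow_one_div {a : ℝ} (ha : 0 < a) {γ : ℝ} (hγ : 1 + γ ≠ 0) :
    a ^ (γ / (1 + γ)) * a ^ (1 / (1 + γ)) = a := by
  rw [← rpow_add ha, ← add_div, add_comm, div_self hγ, rpow_one]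

theorem sum_rpow_mul_rpow_le_one {ι : Type*} (s : Finset ι) {p q : ι → ℝ}
    (hp : ∀ i ∈ s, 0 ≤ p i) (hq : ∀ i ∈ s, 0 ≤ q i) (hps : ∑ i ∈ s, p i = 1)
    (hqs : ∑ i ∈ s, q i = 1) {a b : ℝ} (ha : 0 ≤ a) (hb : 0 ≤ b) (hab : a + b = 1) :
    ∑ i ∈ s, p i ^ a * q i ^ b ≤ 1 :=
  calc ∑ i ∈ s, p i ^ a * q i ^ b ≤ ∑ i ∈ s, (a * p i + b * q i) :=
        sum_le_sum fun i hi => geom_mean_le_arith_mean2_weighted ha hb (hp i hi) (hq i hi) hab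
    _ = 1 := by rw [sum_add_distrib, ← mul_sum, ← mul_sum, hps, hqs, mul_one, mul_one, hab]

end Real

theorem gallagerE0_deriv_at_zero_general
    (𝒴 : Type) [Fintype 𝒴]
    (P : ZMod 2 → 𝒴 → ℝ)
    (hPpos : ∀ x y, 0 < P x y) (hPsum : ∀ x, ∑ y : 𝒴, P x y = 1)
    (γ : ℝ) (hγ0 : 0 ≤ γ) :
    HasDerivAt (fun p => gallagerE0 P p γ)
      (γ / Real.log 2 *
        (1 - ∑ y : 𝒴, P 0 y ^ (γ / (1 + γ)) * P 1 y ^ ((1 : ℝ) / (1 + γ)))) 0 ∧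
    0 ≤ γ / Real.log 2 *
        (1 - ∑ y : 𝒴, P 0 y ^ (γ / (1 + γ)) * P 1 y ^ ((1 : ℝ) / (1 + γ))) := by
  have hγ : 0 < 1 + γ := by linarith
  have hsum_le := Real.sum_rpow_mul_rpow_le_one univ (fun y _ => (hPpos 0 y).le)
    (fun y _ => (hPpos 1 y).le) (hPsum 0) (hPsum 1) (by positivity) (by positivity)
    (by rw [← add_div, add_comm, div_self hγ.ne'] : γ / (1 + γ) + 1 / (1 + γ) = 1)
  refine ⟨?_, mul_nonneg (div_nonneg hγ0 (Real.log_pos one_lt_two).le) (sub_nonneg.2 hsum_le)⟩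
  have hP0 y : P 0 y ^ (γ / (1 + γ)) * P 0 y ^ (1 / (1 + γ)) = P 0 y :=
    Real.rpow_div_one_add_mul_rpow_one_div (hPpos 0 y) hγ.ne'
  have hF := HasDerivAt.fun_sum (u := univ) fun y _ =>
    Real.hasDerivAt_mul_lineMap_rpow_zero (Real.rpow_pos_of_pos (hPpos 0 y) (1 / (1 + γ)))
      (P 1 y ^ (1 / (1 + γ))) γ
  simp only [Real.rpow_one_div_one_add_rpow (hPpos 0 _).le, hP0, ← mul_sum, sum_sub_distrib,
    hPsum 0] at hF
  have hF0 : ∑ y : 𝒴, P 0 y ^ (1 / (1 + γ)) *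
      ((1 - 0) * P 0 y ^ (1 / (1 + γ)) + 0 * P 1 y ^ (1 / (1 + γ))) ^ γ = 1 := by
    simp only [sub_zero, one_mul, zero_mul, add_zero,
      Real.rpow_one_div_one_add_rpow (hPpos 0 _).le, mul_comm (P 0 _ ^ (1 / (1 + γ))), hP0,
      hPsum 0]
  refine ((hF.log (by rw [hF0]; exact one_ne_zero)).div_const (Real.log 2)).neg.congr_deriv ?_
  rw [hF0]
  ring

/-- For every fixed `γ ∈ [0,1]`, the function `p ↦ E_0(p,γ)` is differentiable at
`p = 0` with derivative
`(γ/ln 2)·(1 − Σ_y P(y|0)^{γ/(1+γ)}·P(y|1)^{1/(1+γ)})`, and this derivative is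
nonnegative. -/
theorem gallagerE0_deriv_at_zero
    (𝒴 : Type) [Fintype 𝒴]
    (P : ZMod 2 → 𝒴 → ℝ)
    (hPpos : ∀ x y, 0 < P x y) (hPsum : ∀ x, ∑ y : 𝒴, P x y = 1)
    (γ : ℝ) (hγ0 : 0 ≤ γ) (hγ1 : γ ≤ 1) :
    HasDerivAt (fun p => gallagerE0 P p γ)
      (γ / Real.log 2 *
        (1 - ∑ y : 𝒴, P 0 y ^ (γ / (1 + γ)) * P 1 y ^ ((1 : ℝ) / (1 + γ)))) 0 ∧
    0 ≤ γ / Real.log 2 *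
        (1 - ∑ y : 𝒴, P 0 y ^ (γ / (1 + γ)) * P 1 y ^ ((1 : ℝ) / (1 + γ))) :=
  gallagerE0_deriv_at_zero_general 𝒴 P hPpos hPsum γ hγ0
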